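/- The Constant Domain principle CD is derivable from the Quantifier Switch principle SW over intuitionistic predicate logic: IQC + SW proves (∀x (A(x) ∨ B)) → (∀x A(x) ∨ B) for x not free in B. -/
import Mathlib

/-- First-order terms: variables and function symbols (indexed by naturals)
applied to lists of terms. Constants are 0-ary function symbols. -/
inductive Term : Type
  | var : ℕ → Term
  | func : ℕ → List Term → Term

mutual
  /-- Substitution of the term `s` for the variable `x` in a term. -/
  def Term.subst (x : ℕ) (s : Term) : Term → Term
    | .var y => if y = x then s else .var y
    | .func f ts => .func f (Term.substList x s ts)
  def Term.substList (x : ℕ) (s : Term) : List Term → List Term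
    | [] => []
    | t :: ts => Term.subst x s t :: Term.substList x s ts
end

/-- First-order formulas of the language of `IQC`. -/
inductive Fml : Type
  | bot : Fml
  | top : Fml
  | rel : ℕ → List Term → Fml
  | and : Fml → Fml → Fml
  | or : Fml → Fml → Fml
  | imp : Fml → Fml → Fml
  | all : ℕ → Fml → Fml
  | ex : ℕ → Fml → Fml

/-- Substitution of a term for a (free) variable in a formula. -/
def Fml.subst (x : ℕ) (s : Term) : Fml → Fml
  | .bot => .bot
  | .top => .top
  | .rel r ts => .rel r (Term.substList x s ts)
  | .and A B => .and (A.subst x s) (B.subst x s)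
  | .or A B => .or (A.subst x s) (B.subst x s)
  | .imp A B => .imp (A.subst x s) (B.subst x s)
  | .all y A => if y = x then .all y A else .all y (A.subst x s)
  | .ex y A => if y = x then .ex y A else .ex y (A.subst x s)

/-- The variable `x` occurs in a term. -/
inductive Term.HasVar (x : ℕ) : Term → Prop
  | var : Term.HasVar x (.var x)
  | func {f : ℕ} {ts : List Term} {t : Term} :
      t ∈ ts → Term.HasVar x t → Term.HasVar x (.func f ts)

/-- The variable `x` occurs free in a formula. -/
inductive Fml.FreeIn (x : ℕ) : Fml → Prop
  | rel {r ts t} : t ∈ ts → Term.HasVar x t → Fml.FreeIn x (.rel r ts)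
  | andL {A B} : FreeIn x A → FreeIn x (.and A B)
  | andR {A B} : FreeIn x B → FreeIn x (.and A B)
  | orL {A B} : FreeIn x A → FreeIn x (.or A B)
  | orR {A B} : FreeIn x B → FreeIn x (.or A B)
  | impL {A B} : FreeIn x A → FreeIn x (.imp A B)
  | impR {A B} : FreeIn x B → FreeIn x (.imp A B)
  | all {y A} : y ≠ x → FreeIn x A → FreeIn x (.all y A)
  | ex {y A} : y ≠ x → FreeIn x A → FreeIn x (.ex y A)

/-- The function symbol `f` occurs in a term. -/
inductive Term.HasFunc (f : ℕ) : Term → Prop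
  | self {ts} : Term.HasFunc f (.func f ts)
  | arg {g ts t} : t ∈ ts → Term.HasFunc f t → Term.HasFunc f (.func g ts)

/-- The function symbol `f` occurs in a formula. -/
inductive Fml.HasFunc (f : ℕ) : Fml → Prop
  | rel {r ts t} : t ∈ ts → Term.HasFunc f t → Fml.HasFunc f (.rel r ts)
  | andL {A B} : HasFunc f A → HasFunc f (.and A B)
  | andR {A B} : HasFunc f B → HasFunc f (.and A B)
  | orL {A B} : HasFunc f A → HasFunc f (.or A B)
  | orR {A B} : HasFunc f B → HasFunc f (.or A B)
  | impL {A B} : HasFunc f A → HasFunc f (.imp A B)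
  | impR {A B} : HasFunc f B → HasFunc f (.imp A B)
  | all {y A} : HasFunc f A → HasFunc f (.all y A)
  | ex {y A} : HasFunc f A → HasFunc f (.ex y A)

/-- Hilbert-style derivability for intuitionistic predicate logic `IQC`
from an extra set of axioms `L`.  `Deriv ∅` is provability in `IQC`. -/
inductive Deriv (L : Set Fml) : Fml → Prop
  | ax {A} : A ∈ L → Deriv L A
  | impK {A B} : Deriv L (.imp A (.imp B A))
  | impS {A B C} :
      Deriv L (.imp (.imp A (.imp B C)) (.imp (.imp A B) (.imp A C)))
  | andI {A B} : Deriv L (.imp A (.imp B (.and A B)))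
  | andE1 {A B} : Deriv L (.imp (.and A B) A)
  | andE2 {A B} : Deriv L (.imp (.and A B) B)
  | orI1 {A B} : Deriv L (.imp A (.or A B))
  | orI2 {A B} : Deriv L (.imp B (.or A B))
  | orE {A B C} :
      Deriv L (.imp (.imp A C) (.imp (.imp B C) (.imp (.or A B) C)))
  | botE {A} : Deriv L (.imp .bot A)
  | topI : Deriv L .top
  | allE {x A} (t : Term) : Deriv L (.imp (.all x A) (A.subst x t))
  | exI {x A} (t : Term) : Deriv L (.imp (A.subst x t) (.ex x A))
  | allShift {x A B} : ¬ Fml.FreeIn x B →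
      Deriv L (.imp (.all x (.imp B A)) (.imp B (.all x A)))
  | exShift {x A B} : ¬ Fml.FreeIn x B →
      Deriv L (.imp (.all x (.imp A B)) (.imp (.ex x A) B))
  | mp {A B} : Deriv L (.imp A B) → Deriv L A → Deriv L B
  | gen {x A} : Deriv L A → Deriv L (.all x A)

/-- The set of all instances of the Quantifier Switch scheme
`(∀x C(x) → D) → ∃x (C(x) → D)` with `x` not free in `D`. -/
def SWInstances : Set Fml :=
  {G | ∃ (C D : Fml) (x : ℕ), ¬ Fml.FreeIn x D ∧
    G = .imp (.imp (.all x C) D) (.ex x (.imp C D))}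

mutual
  theorem Term.subst_id (x : ℕ) : ∀ t, Term.subst x (.var x) t = t
    | .var y => by
        rw [Term.subst]; split
        · next h => rw [h]
        · rfl
    | .func f ts => by rw [Term.subst, Term.substList_id]
  theorem Term.substList_id (x : ℕ) : ∀ ts, Term.substList x (.var x) ts = ts
    | [] => rfl
    | t :: ts => by rw [Term.substList, Term.subst_id, Term.substList_id]
end

theorem Fml.subst_id (x : ℕ) : ∀ F : Fml, Fml.subst x (.var x) F = F
  | .bot => rfl
  | .top => rfl
  | .rel r ts => by rw [Fml.subst, Term.substList_id]
  | .and A B => by rw [Fml.subst, Fml.subst_id x A, Fml.subst_id x B]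
  | .or A B => by rw [Fml.subst, Fml.subst_id x A, Fml.subst_id x B]
  | .imp A B => by rw [Fml.subst, Fml.subst_id x A, Fml.subst_id x B]
  | .all y A => by rw [Fml.subst, Fml.subst_id x A]; split <;> rfl
  | .ex y A => by rw [Fml.subst, Fml.subst_id x A]; split <;> rfl

namespace Deriv
variable {L : Set Fml} {A B C X Y Z : Fml}

theorem mpc (h : Deriv L (.imp X (.imp Y Z))) (hy : Deriv L Y) :
    Deriv L (.imp X Z) :=
  mp (mp impS h) (mp impK hy)

theorem comp (h1 : Deriv L (.imp A B)) (h2 : Deriv L (.imp B C)) :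
    Deriv L (.imp A C) :=
  mp (mp impS (mp impK h2)) h1

end Deriv

/-- The Constant Domain principle is derivable from the
Quantifier Switch principle over intuitionistic predicate logic:
`IQC + SW ⊢ (∀x (A(x) ∨ B)) → (∀x A(x) ∨ B)` for `x` not free in `B`. -/
theorem CD_derivable_from_SW (A B : Fml) (x : ℕ) (hxB : ¬ Fml.FreeIn x B) :
    Deriv SWInstances (.imp (.all x (.or A B)) (.or (.all x A) B)) := by
  have hxD : ¬ Fml.FreeIn x (Fml.or (.all x A) B) := by
    intro h
    cases h with
    | orL h => cases h with | all hne _ => exact hne rfl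
    | orR h => exact hxB h
  have sw : Deriv SWInstances
      (.imp (.imp (.all x A) (Fml.or (.all x A) B))
        (.ex x (.imp A (Fml.or (.all x A) B)))) :=
    Deriv.ax ⟨A, Fml.or (.all x A) B, x, hxD, rfl⟩
  have hex : Deriv SWInstances (.ex x (.imp A (Fml.or (.all x A) B))) :=
    Deriv.mp sw Deriv.orI1
  have e : Deriv SWInstances (.imp (.all x (.or A B)) (.or A B)) := by
    have := Deriv.allE (L := SWInstances) (x := x) (A := .or A B) (.var x)
    rwa [Fml.subst_id] at this
  have s1 : Deriv SWInstances
      (.imp (.imp A (Fml.or (.all x A) B))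
        (.imp (.or A B) (Fml.or (.all x A) B))) :=
    Deriv.mpc Deriv.orE Deriv.orI2
  have T : Deriv SWInstances
      (.imp (.imp A (Fml.or (.all x A) B))
        (.imp (.all x (.or A B)) (Fml.or (.all x A) B))) :=
    Deriv.comp s1 (Deriv.comp Deriv.impK (Deriv.mpc Deriv.impS e))
  have hnf : ¬ Fml.FreeIn x (Fml.imp (.all x (.or A B)) (Fml.or (.all x A) B)) := by
    intro h
    cases h with
    | impL h => cases h with | all hne _ => exact hne rfl
    | impR h => exact hxD h
  exact Deriv.mp (Deriv.mp (Deriv.exShift hnf) (Deriv.gen T)) hex
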